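/- Let n > 1 and let I_{2n} = {−n, −n+1, …, n−1}. Let Φ be the Feigin–Tsygan isomorphism gJ(R) → gl_{I_{2n}}(J(R)) determined by Φ(E_{m+2rn, m'+2sn}(a)) = e_{m,m'}(E_{r,s}(a)) for m,m' ∈ I_{2n}, r,s ∈ ℤ, a ∈ R. Define sp_J(R) = {X ∈ gJ(R) : τ_{−1}(X) = −X}, where τ_{−1}(X) = −J_{−1} ᵗ(X) J_{−1} with J_{−1} = Σ_{i∈ℤ} (−1)^i E_{i,−1−i}, and define sp_{2n}(J(R)) = {X ∈ gl_{I_{2n}}(J(R)) : X^† J_n^C + J_n^C X = 0}, where J_n^C = Σ_{i=−n}^{n−1} (−1)^i e_{i,−i−1} and X^† is the transpose of X with the anti-involution ∗ of J(R) (E_{k,l}(r)^∗ = E_{−l,−k}(r̄)) applied to each entry. Then Φ restricts to an isomorphism of Lie algebras sp_J(R) → sp_{2n}(J(R)). -/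

import Mathlib

/-!
STATEMENT 7: The Feigin–Tsygan isomorphism `Φ : gJ(R) → gl_{I_{2n}}(J(R))`,
`I_{2n} = {−n,…,n−1}`, `Φ(E_{m+2rn, m'+2sn}(a)) = e_{m,m'}(E_{r,s}(a))`,
restricts to an isomorphism of Lie algebras
`sp_J(R) = {X : τ_{−1}(X) = −X} → sp_{2n}(J(R)) = {A : A^† J_n^C + J_n^C A = 0}`.
-/

def HasBand {R : Type*} [Zero R] (A : ℤ → ℤ → R) (N : ℤ) : Prop :=
  ∀ i j : ℤ, N < |i - j| → A i j = 0

def IsJacobi {R : Type*} [Zero R] (A : ℤ → ℤ → R) : Prop := ∃ N : ℤ, HasBand A N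

noncomputable def jmul {R : Type*} [Ring R] (A B : ℤ → ℤ → R) : ℤ → ℤ → R :=
  fun i j => ∑ᶠ l : ℤ, A i l * B l j

noncomputable def lieB {R : Type*} [Ring R] (A B : ℤ → ℤ → R) : ℤ → ℤ → R :=
  jmul A B - jmul B A

def idMat {R : Type*} [Ring R] : ℤ → ℤ → R := fun i j => if i = j then 1 else 0

/-- `τ_{−1}(X) = −J_{−1} ᵗ(X) J_{−1}` where `J_{−1} = Σ_i (−1)^i E_{i,−1−i}`;
entrywise `τ_{−1}(X)_{i,j} = (−1)^{i+j} bar (X_{−1−j,−1−i})`. -/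
def tauC {R : Type*} [Ring R] (bar : R → R) (X : ℤ → ℤ → R) : ℤ → ℤ → R :=
  fun i j => ((i + j).negOnePow : ℤ) • bar (X (-1 - j) (-1 - i))

/-- The anti-involution `∗` of `J(R)`: `E_{k,l}(r)^∗ = E_{−l,−k}(r̄)`. -/
def astar {R : Type*} (bar : R → R) (X : ℤ → ℤ → R) : ℤ → ℤ → R :=
  fun i j => bar (X (-j) (-i))

/-- The index set `I_{2n} = {−n, …, n−1}`. -/
noncomputable def Isp (n : ℕ) : Finset ℤ := Finset.Icc (-(n : ℤ)) ((n : ℤ) - 1)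

/-- The restriction of the Feigin–Tsygan isomorphism:
`Φ(X)_{m,m'} (r,s) = X(m + 2rn, m' + 2sn)`. -/
def PhiSp {R : Type*} (n : ℕ) (X : ℤ → ℤ → R) :
    {i : ℤ // i ∈ Isp n} → {i : ℤ // i ∈ Isp n} → ℤ → ℤ → R :=
  fun m m' r s => X ((m : ℤ) + r * (2 * n)) ((m' : ℤ) + s * (2 * n))

/-- Multiplication of matrices indexed by `I_{2n}` with entries in `J(R)`. -/
noncomputable def matMulSp {R : Type*} [Ring R] (n : ℕ)
    (A B : {i : ℤ // i ∈ Isp n} → {i : ℤ // i ∈ Isp n} → ℤ → ℤ → R) :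
    {i : ℤ // i ∈ Isp n} → {i : ℤ // i ∈ Isp n} → ℤ → ℤ → R :=
  fun m m' => ∑ p : {i : ℤ // i ∈ Isp n}, jmul (A m p) (B p m')

/-- `A^†`: transpose with `∗` applied to each entry. -/
def daggerSp {R : Type*} (bar : R → R) (n : ℕ)
    (A : {i : ℤ // i ∈ Isp n} → {i : ℤ // i ∈ Isp n} → ℤ → ℤ → R) :
    {i : ℤ // i ∈ Isp n} → {i : ℤ // i ∈ Isp n} → ℤ → ℤ → R :=
  fun m m' => astar bar (A m' m)

/-- `J_n^C = Σ_{i=−n}^{n−1} (−1)^i e_{i,−i−1}` (entries in `J(R)`). -/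
def JnC {R : Type*} [Ring R] (n : ℕ) :
    {i : ℤ // i ∈ Isp n} → {i : ℤ // i ∈ Isp n} → ℤ → ℤ → R :=
  fun m m' => if (m' : ℤ) = -(m : ℤ) - 1 then ((m : ℤ).negOnePow : ℤ) • idMat else 0

/-!
Writing each integer uniquely as `m + r·2n` with `m ∈ I_{2n}` identifies `ℤ` with `I_{2n} × ℤ`,
and `Φ` is reindexing along this bijection. So `Φ` is bijective, it turns a band of width `N`
into block bands of width `N` (and back, up to a factor `2n`), and, as a banded row has finitely
many nonzero entries, it turns the product over `ℤ` into the block product over `I_{2n}`.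
The reflection `i ↦ −1−i` in `τ_{−1}` becomes `(m, r) ↦ (−m−1, −r)`, which is what `J_n^C` and `∗`
do blockwise, and the signs agree because `(−1)^{2rn} = 1`; hence the `(m, m')` block of
`Φ(X)^† J_n^C + J_n^C Φ(X)` is `±Φ(τ_{−1}X + X)_{−m−1, m'}`.
-/

namespace Isp

variable {n : ℕ}

lemma neg_sub_one_mem {m : ℤ} (hm : m ∈ Isp n) : -m - 1 ∈ Isp n := by
  simp only [Isp, Finset.mem_Icc] at *
  omega

def reflect (m : {i : ℤ // i ∈ Isp n}) : {i : ℤ // i ∈ Isp n} :=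
  ⟨-m - 1, neg_sub_one_mem m.2⟩

@[simp]
lemma reflect_reflect (m : {i : ℤ // i ∈ Isp n}) : reflect (reflect m) = m :=
  Subtype.ext (by simp [reflect])

lemma neg_one_sub_add_mul (m : {i : ℤ // i ∈ Isp n}) (r : ℤ) :
    -1 - ((m : ℤ) + r * (2 * n)) = (reflect m : ℤ) + -r * (2 * n) := by
  simp only [reflect]
  ring

def decompEquiv (hn : 0 < n) : {i : ℤ // i ∈ Isp n} × ℤ ≃ ℤ where
  toFun q := q.1 + q.2 * (2 * n)
  invFun i := (⟨(i + n) % (2 * n) - n, by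
      have := Int.emod_nonneg (i + n) (b := 2 * n) (by omega)
      have := Int.emod_lt_of_pos (i + n) (b := 2 * n) (by omega)
      simp only [Isp, Finset.mem_Icc]
      omega⟩, (i + n) / (2 * n))
  left_inv := by
    rintro ⟨⟨m, hm⟩, r⟩
    simp only [Isp, Finset.mem_Icc] at hm
    have hmn : m + r * (2 * n) + n = (m + n) + r * (2 * n) := by ring
    have h0 : 0 ≤ m + n := by omega
    have h1 : m + n < 2 * n := by omega
    simp only [Prod.mk.injEq, Subtype.mk.injEq, hmn, Int.add_mul_emod_self_right,
      Int.emod_eq_of_lt h0 h1, Int.add_mul_ediv_right _ _ (by omega : (2 * n : ℤ) ≠ 0),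
      Int.ediv_eq_zero_of_lt h0 h1]
    omega
  right_inv i := by
    have := Int.mul_ediv_add_emod (i + n) (2 * n)
    simp only
    linear_combination this

end Isp

open Isp

section Band

variable {R : Type*} [Zero R]

lemma HasBand.mono {A : ℤ → ℤ → R} {N M : ℤ} (hA : HasBand A N) (hNM : N ≤ M) :
    HasBand A M :=
  fun i j hij => hA i j (hNM.trans_lt hij)

lemma HasBand.phiSp {n : ℕ} {X : ℤ → ℤ → R} {N : ℤ} (hX : HasBand X N)
    (m m' : {i : ℤ // i ∈ Isp n}) : HasBand (PhiSp n X m m') N := by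
  intro r s hrs
  apply hX
  rcases lt_or_ge N 0 with hN | hN
  · exact hN.trans_le (abs_nonneg _)
  have hm := m.2
  have hm' := m'.2
  simp only [Isp, Finset.mem_Icc] at hm hm'
  have hdist : |r - s| * (2 * n) - |(m' : ℤ) - m| ≤
      |(m : ℤ) + r * (2 * n) - (m' + s * (2 * n))| :=
    calc |r - s| * (2 * n) - |(m' : ℤ) - m| = |(r - s) * (2 * n)| - |(m' : ℤ) - m| := by
          rw [abs_mul, abs_of_nonneg (by positivity : (0 : ℤ) ≤ 2 * n)]
      _ ≤ |(r - s) * (2 * n) - ((m' : ℤ) - m)| := abs_sub_abs_le_abs_sub _ _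
      _ = _ := by ring_nf
  have hmm' : |(m' : ℤ) - m| < 2 * n := abs_lt.2 ⟨by omega, by omega⟩
  nlinarith [mul_le_mul_of_nonneg_right (show N + 1 ≤ |r - s| from hrs)
    (by positivity : (0 : ℤ) ≤ 2 * n)]

end Band

section PhiSp

variable {R : Type*} {n : ℕ}

def phiSpEquiv (hn : 0 < n) :
    (ℤ → ℤ → R) ≃ ({i : ℤ // i ∈ Isp n} → {i : ℤ // i ∈ Isp n} → ℤ → ℤ → R) where
  toFun := PhiSp n
  invFun A i j := A ((decompEquiv hn).symm i).1 ((decompEquiv hn).symm j).1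
    ((decompEquiv hn).symm i).2 ((decompEquiv hn).symm j).2
  left_inv X := by
    funext i j
    exact congrArg₂ X ((decompEquiv hn).apply_symm_apply i) ((decompEquiv hn).apply_symm_apply j)
  right_inv A := by
    funext m m' r s
    change A ((decompEquiv hn).symm (decompEquiv hn (m, r))).1
      ((decompEquiv hn).symm (decompEquiv hn (m', s))).1
      ((decompEquiv hn).symm (decompEquiv hn (m, r))).2
      ((decompEquiv hn).symm (decompEquiv hn (m', s))).2 = A m m' r s
    simp only [Equiv.symm_apply_apply]

lemma HasBand.of_phiSp [Zero R] (hn : 0 < n) {X : ℤ → ℤ → R} {N : ℤ}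
    (hX : ∀ m m', HasBand (PhiSp n X m m') N) : HasBand X (2 * n * N + 2 * n - 1) := by
  intro i j hij
  obtain ⟨⟨m, r⟩, rfl⟩ := (decompEquiv hn).surjective i
  obtain ⟨⟨m', s⟩, rfl⟩ := (decompEquiv hn).surjective j
  refine hX m m' r s (lt_of_not_ge fun hrs => hij.not_ge ?_)
  have hm := m.2
  have hm' := m'.2
  simp only [Isp, Finset.mem_Icc] at hm hm'
  have hdist : |(m : ℤ) + r * (2 * n) - (m' + s * (2 * n))| ≤
      |(m : ℤ) - m'| + |r - s| * (2 * n) :=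
    calc |(m : ℤ) + r * (2 * n) - (m' + s * (2 * n))| = |((m : ℤ) - m') + (r - s) * (2 * n)| := by
          ring_nf
      _ ≤ |(m : ℤ) - m'| + |(r - s) * (2 * n)| := abs_add_le _ _
      _ = _ := by rw [abs_mul, abs_of_nonneg (by positivity : (0 : ℤ) ≤ 2 * n)]
  have hmm' : |(m : ℤ) - m'| ≤ 2 * n - 1 := abs_le.2 ⟨by omega, by omega⟩
  change |(m : ℤ) + r * (2 * n) - (m' + s * (2 * n))| ≤ 2 * n * N + 2 * n - 1
  nlinarith [mul_le_mul_of_nonneg_right hrs (by positivity : (0 : ℤ) ≤ 2 * n)]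

lemma isJacobi_iff_phiSp [Zero R] (hn : 0 < n) {X : ℤ → ℤ → R} :
    IsJacobi X ↔ ∀ m m', IsJacobi (PhiSp n X m m') := by
  refine ⟨fun ⟨N, hX⟩ m m' => ⟨N, hX.phiSp m m'⟩, fun hX => ?_⟩
  choose N hN using hX
  obtain ⟨M, hM⟩ := Finite.exists_le fun p : {i : ℤ // i ∈ Isp n} × {i : ℤ // i ∈ Isp n} =>
    N p.1 p.2
  exact ⟨_, HasBand.of_phiSp hn fun m m' => (hN m m').mono (hM (m, m'))⟩

end PhiSp

section Product

variable {R : Type*} [Ring R] {n : ℕ}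

lemma HasBand.finite_support_mul {X : ℤ → ℤ → R} {N : ℤ} (hX : HasBand X N)
    (Y : ℤ → ℤ → R) (i j : ℤ) : (Function.support fun l => X i l * Y l j).Finite := by
  refine (Set.finite_Icc (i - N) (i + N)).subset fun l hl => ?_
  by_contra hout
  refine hl (show X i l * Y l j = 0 from ?_)
  rw [hX i l (lt_abs.2 (by simp only [Set.mem_Icc, not_and_or, not_le] at hout; omega)),
    zero_mul]

lemma finsum_eq_sum_finsum_decomp {M : Type*} [AddCommMonoid M] (hn : 0 < n) {f : ℤ → M}
    (hf : (Function.support f).Finite) :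
    ∑ᶠ l, f l = ∑ p : {i : ℤ // i ∈ Isp n}, ∑ᶠ t : ℤ, f (p + t * (2 * n)) := by
  rw [← finsum_comp_equiv (decompEquiv hn), finsum_curry _, finsum_eq_sum_of_fintype]
  · rfl
  · exact hf.preimage (decompEquiv hn).injective.injOn

lemma phiSp_jmul (hn : 0 < n) {X : ℤ → ℤ → R} {N : ℤ} (hX : HasBand X N) (Y : ℤ → ℤ → R) :
    PhiSp n (jmul X Y) = matMulSp n (PhiSp n X) (PhiSp n Y) := by
  funext m m' r s
  rw [PhiSp, jmul, finsum_eq_sum_finsum_decomp hn (hX.finite_support_mul Y _ _), matMulSp,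
    Finset.sum_apply, Finset.sum_apply]
  rfl

lemma phiSp_lieB (hn : 0 < n) {X Y : ℤ → ℤ → R} (hX : IsJacobi X) (hY : IsJacobi Y) :
    PhiSp n (lieB X Y) =
      matMulSp n (PhiSp n X) (PhiSp n Y) - matMulSp n (PhiSp n Y) (PhiSp n X) := by
  obtain ⟨NX, hX⟩ := hX
  obtain ⟨NY, hY⟩ := hY
  change PhiSp n (jmul X Y) - PhiSp n (jmul Y X) = _
  rw [phiSp_jmul hn hX, phiSp_jmul hn hY]

end Product

section Symplectic

variable {R : Type*} [Ring R] {n : ℕ}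

lemma jmul_zero (Z : ℤ → ℤ → R) : jmul Z 0 = 0 := by
  funext i j
  simp [jmul]

lemma zero_jmul (Z : ℤ → ℤ → R) : jmul 0 Z = 0 := by
  funext i j
  simp [jmul]

lemma jmul_zsmul_idMat (Z : ℤ → ℤ → R) (c : ℤ) : jmul Z (c • idMat) = c • Z := by
  funext i j
  rw [jmul, finsum_eq_single _ j fun l hl => by simp [idMat, hl]]
  simpa [idMat] using (Int.cast_comm c (Z i j)).symm

lemma zsmul_idMat_jmul (c : ℤ) (Z : ℤ → ℤ → R) : jmul (c • idMat) Z = c • Z := by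
  funext i j
  rw [jmul, finsum_eq_single _ i fun l hl => by simp [idMat, Ne.symm hl]]
  simp [idMat]

lemma matMulSp_JnC (A : {i : ℤ // i ∈ Isp n} → {i : ℤ // i ∈ Isp n} → ℤ → ℤ → R)
    (m m' : {i : ℤ // i ∈ Isp n}) :
    matMulSp n A (JnC n) m m' = ((reflect m' : ℤ).negOnePow : ℤ) • A m (reflect m') := by
  rw [matMulSp, Fintype.sum_eq_single (reflect m') fun p hp => ?_]
  · rw [JnC, if_pos (by simp [reflect]), jmul_zsmul_idMat]
  · rw [JnC, if_neg fun h => hp (Subtype.ext (by simp only [reflect]; omega)), jmul_zero]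

lemma JnC_matMulSp (A : {i : ℤ // i ∈ Isp n} → {i : ℤ // i ∈ Isp n} → ℤ → ℤ → R)
    (m m' : {i : ℤ // i ∈ Isp n}) :
    matMulSp n (JnC n) A m m' = ((m : ℤ).negOnePow : ℤ) • A (reflect m) m' := by
  rw [matMulSp, Fintype.sum_eq_single (reflect m) fun p hp => ?_]
  · rw [JnC, if_pos (show (reflect m : ℤ) = -(m : ℤ) - 1 from rfl), zsmul_idMat_jmul]
  · rw [JnC, if_neg (show ¬(p : ℤ) = -(m : ℤ) - 1 from fun h => hp (Subtype.ext h)), zero_jmul]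

lemma phiSp_tauC (bar : R → R) (X : ℤ → ℤ → R) (m m' : {i : ℤ // i ∈ Isp n}) (r s : ℤ) :
    PhiSp n (tauC bar X) m m' r s =
      (((m : ℤ) + m').negOnePow : ℤ) • bar (PhiSp n X (reflect m') (reflect m) (-s) (-r)) := by
  have hsign : ((m : ℤ) + r * (2 * n) + ((m' : ℤ) + s * (2 * n))).negOnePow =
      ((m : ℤ) + m').negOnePow :=
    (Int.negOnePow_eq_iff _ _).2 ⟨(r + s) * n, by ring⟩
  rw [PhiSp, tauC, neg_one_sub_add_mul, neg_one_sub_add_mul, hsign]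
  rfl

lemma spForm_phiSp (bar : R → R) (X : ℤ → ℤ → R) (m m' : {i : ℤ // i ∈ Isp n}) :
    (matMulSp n (daggerSp bar n (PhiSp n X)) (JnC n) + matMulSp n (JnC n) (PhiSp n X)) m m' =
      ((m : ℤ).negOnePow : ℤ) • PhiSp n (tauC bar X + X) (reflect m) m' := by
  have hsign : ((reflect m' : ℤ).negOnePow : ℤ) =
      ((m : ℤ).negOnePow : ℤ) * (((reflect m : ℤ) + m').negOnePow : ℤ) := by
    rw [← Units.val_mul, ← Int.negOnePow_add]
    exact congrArg _ ((Int.negOnePow_eq_iff _ _).2 ⟨-m', by simp only [reflect]; ring⟩)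
  funext r s
  simp only [Pi.add_apply, matMulSp_JnC, JnC_matMulSp, Pi.smul_apply, daggerSp, astar]
  change _ = ((m : ℤ).negOnePow : ℤ) •
    (PhiSp n (tauC bar X) (reflect m) m' r s + PhiSp n X (reflect m) m' r s)
  rw [phiSp_tauC, reflect_reflect, smul_add, smul_smul, hsign]

lemma tauC_eq_neg_iff (hn : 0 < n) (bar : R → R) (X : ℤ → ℤ → R) :
    tauC bar X = -X ↔
      matMulSp n (daggerSp bar n (PhiSp n X)) (JnC n) + matMulSp n (JnC n) (PhiSp n X) = 0 := by
  rw [eq_neg_iff_add_eq_zero, ← (phiSpEquiv (R := R) hn).injective.eq_iff]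
  change PhiSp n (tauC bar X + X) = 0 ↔ _
  constructor
  · intro h
    funext m m'
    rw [spForm_phiSp, h]
    simp
  · intro h
    funext m m'
    have hm := congrFun (congrFun h (reflect m)) m'
    rwa [spForm_phiSp, reflect_reflect, Pi.zero_apply, Pi.zero_apply, ← Units.smul_def,
      smul_eq_zero_iff_eq] at hm

end Symplectic

theorem statement7_general (k R : Type*) [Field k] [Ring R] [Algebra k R]
    (bar : R →ₗ[k] R) (n : ℕ) (hn : 1 < n) :
    -- well-definedness: entries of `Φ(X)` lie in `J(R)`
    (∀ X : ℤ → ℤ → R, IsJacobi X →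
      ∀ m m' : {i : ℤ // i ∈ Isp n}, IsJacobi (PhiSp n X m m')) ∧
    -- `Φ` maps `sp_J(R)` exactly onto `sp_{2n}(J(R))`
    (∀ X : ℤ → ℤ → R, IsJacobi X →
      (tauC (⇑bar) X = -X ↔
        matMulSp n (daggerSp (⇑bar) n (PhiSp n X)) (JnC n) +
          matMulSp n (JnC n) (PhiSp n X) = 0)) ∧
    -- `Φ` is a homomorphism of Lie algebras
    (∀ X Y : ℤ → ℤ → R, IsJacobi X → IsJacobi Y →
      PhiSp n (lieB X Y) =
        matMulSp n (PhiSp n X) (PhiSp n Y) - matMulSp n (PhiSp n Y) (PhiSp n X)) ∧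
    -- injectivity on `sp_J(R)`
    (∀ X Y : ℤ → ℤ → R, IsJacobi X → IsJacobi Y → tauC (⇑bar) X = -X →
      tauC (⇑bar) Y = -Y → PhiSp n X = PhiSp n Y → X = Y) ∧
    -- surjectivity onto `sp_{2n}(J(R))`
    (∀ A : {i : ℤ // i ∈ Isp n} → {i : ℤ // i ∈ Isp n} → ℤ → ℤ → R,
      (∀ m m', IsJacobi (A m m')) →
      matMulSp n (daggerSp (⇑bar) n A) (JnC n) + matMulSp n (JnC n) A = 0 →
      ∃ X : ℤ → ℤ → R, IsJacobi X ∧ tauC (⇑bar) X = -X ∧ PhiSp n X = A) := by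
  have hn0 : 0 < n := by omega
  refine ⟨fun X hX => (isJacobi_iff_phiSp hn0).1 hX, fun X _ => tauC_eq_neg_iff hn0 bar X,
    fun X Y hX hY => phiSp_lieB hn0 hX hY,
    fun X Y _ _ _ _ hXY => (phiSpEquiv hn0).injective hXY, fun A hA hsp => ?_⟩
  set X := (phiSpEquiv hn0).symm A
  have hXA : PhiSp n X = A := (phiSpEquiv hn0).apply_symm_apply A
  refine ⟨X, (isJacobi_iff_phiSp hn0).2 (hXA ▸ hA), ?_, hXA⟩
  rwa [tauC_eq_neg_iff hn0, hXA]

theorem statement7 (k R : Type*) [Field k] [CharZero k] [Ring R] [Algebra k R]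
    (bar : R →ₗ[k] R) (hbar_mul : ∀ r s : R, bar (r * s) = bar s * bar r)
    (hbar_inv : ∀ r : R, bar (bar r) = r) (n : ℕ) (hn : 1 < n) :
    -- well-definedness: entries of `Φ(X)` lie in `J(R)`
    (∀ X : ℤ → ℤ → R, IsJacobi X →
      ∀ m m' : {i : ℤ // i ∈ Isp n}, IsJacobi (PhiSp n X m m')) ∧
    -- `Φ` maps `sp_J(R)` exactly onto `sp_{2n}(J(R))`
    (∀ X : ℤ → ℤ → R, IsJacobi X →
      (tauC (⇑bar) X = -X ↔
        matMulSp n (daggerSp (⇑bar) n (PhiSp n X)) (JnC n) +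
          matMulSp n (JnC n) (PhiSp n X) = 0)) ∧
    -- `Φ` is a homomorphism of Lie algebras
    (∀ X Y : ℤ → ℤ → R, IsJacobi X → IsJacobi Y →
      PhiSp n (lieB X Y) =
        matMulSp n (PhiSp n X) (PhiSp n Y) - matMulSp n (PhiSp n Y) (PhiSp n X)) ∧
    -- injectivity on `sp_J(R)`
    (∀ X Y : ℤ → ℤ → R, IsJacobi X → IsJacobi Y → tauC (⇑bar) X = -X →
      tauC (⇑bar) Y = -Y → PhiSp n X = PhiSp n Y → X = Y) ∧
    -- surjectivity onto `sp_{2n}(J(R))`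
    (∀ A : {i : ℤ // i ∈ Isp n} → {i : ℤ // i ∈ Isp n} → ℤ → ℤ → R,
      (∀ m m', IsJacobi (A m m')) →
      matMulSp n (daggerSp (⇑bar) n A) (JnC n) + matMulSp n (JnC n) A = 0 →
      ∃ X : ℤ → ℤ → R, IsJacobi X ∧ tauC (⇑bar) X = -X ∧ PhiSp n X = A) :=
  statement7_general k R bar n hn
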